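/- Let σ₁ < σ₂ be real numbers, let q : ℝ → ℝ, and let ψ : ℝ → ℝ be three times differentiable on (σ₁,σ₂) with ψ'(t) > 0 for all t ∈ (σ₁,σ₂). If ψ' satisfies Kummer's equation relative to q on (σ₁,σ₂), then the function v(t) = sin(ψ(t))/√(ψ'(t)) satisfies v''(t) + q(t)·v(t) = 0 for all t ∈ (σ₁,σ₂). -/

import Mathlib

/-!
Differentiating `v = sin ψ / √ψ'` twice, the `cos ψ` terms cancel and
`v'' = -(ψ'² + ψ'''/(2ψ') - (3/4)(ψ''/ψ')²) v`; Kummer's equation says exactly that the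
bracket is `q`.
-/

open Real Set Filter Topology

lemma deriv_deriv_eq_of_eventually_hasDerivAt {f f' : ℝ → ℝ} {t a : ℝ}
    (hf : ∀ᶠ s in 𝓝 t, HasDerivAt f (f' s) s) (hf' : HasDerivAt f' a t) :
    deriv (deriv f) t = a := by
  rw [EventuallyEq.deriv_eq (hf.mono fun _ hs => hs.deriv)]
  exact hf'.deriv

section PhaseAmplitude

variable {ψ p p' : ℝ → ℝ} {t : ℝ}

lemma hasDerivAt_sin_div_sqrt {dp : ℝ} (hψ : HasDerivAt ψ (p t) t) (hp : HasDerivAt p dp t)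
    (hpos : 0 < p t) :
    HasDerivAt (fun s => sin (ψ s) / √(p s))
      (cos (ψ t) * √(p t) - sin (ψ t) * dp / (2 * p t * √(p t))) t := by
  have hr : 0 < √(p t) := sqrt_pos.mpr hpos
  refine (hψ.sin.div (hp.sqrt hpos.ne') hr.ne').congr_deriv ?_
  have hsq := sq_sqrt hpos.le
  set r := √(p t)
  rw [← hsq]
  field_simp

lemma hasDerivAt_cos_mul_sqrt_sub {p'' : ℝ} (hψ : HasDerivAt ψ (p t) t)
    (hp : HasDerivAt p (p' t) t) (hp' : HasDerivAt p' p'' t) (hpos : 0 < p t) :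
    HasDerivAt (fun s => cos (ψ s) * √(p s) - sin (ψ s) * p' s / (2 * p s * √(p s)))
      (-(sin (ψ t) / √(p t)) * (p t ^ 2 + p'' / (2 * p t) - 3 / 4 * (p' t / p t) ^ 2)) t := by
  have hr : 0 < √(p t) := sqrt_pos.mpr hpos
  have hsqrt := hp.sqrt hpos.ne'
  have hnum : HasDerivAt (fun s => sin (ψ s) * p' s)
      (cos (ψ t) * p t * p' t + sin (ψ t) * p'') t :=
    hψ.sin.mul hp'
  have hden : HasDerivAt (fun s => 2 * p s * √(p s))
      (2 * p' t * √(p t) + 2 * p t * (p' t / (2 * √(p t)))) t :=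
    (hp.const_mul 2).mul hsqrt
  refine ((hψ.cos.mul hsqrt).sub (hnum.div hden (by positivity))).congr_deriv ?_
  have hsq := sq_sqrt hpos.le
  set r := √(p t)
  rw [← hsq]
  field_simp
  ring

end PhaseAmplitude

theorem kummer_implies_sin_solution (σ₁ σ₂ : ℝ) (q ψ : ℝ → ℝ)
    (hdiff : ∀ t ∈ Ioo σ₁ σ₂, DifferentiableAt ℝ ψ t ∧
      DifferentiableAt ℝ (deriv ψ) t ∧ DifferentiableAt ℝ (deriv (deriv ψ)) t)
    (hpos : ∀ t ∈ Ioo σ₁ σ₂, 0 < deriv ψ t)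
    (hkummer : ∀ t ∈ Ioo σ₁ σ₂,
      q t - (deriv ψ t) ^ 2 - (1 / 2) * (deriv (deriv (deriv ψ)) t / deriv ψ t)
        + (3 / 4) * (deriv (deriv ψ) t / deriv ψ t) ^ 2 = 0) :
    ∀ t ∈ Ioo σ₁ σ₂,
      deriv (deriv (fun s => Real.sin (ψ s) / Real.sqrt (deriv ψ s))) t
        + q t * (Real.sin (ψ t) / Real.sqrt (deriv ψ t)) = 0 := by
  intro t ht
  have hv' : ∀ᶠ s in 𝓝 t, HasDerivAt (fun s => sin (ψ s) / √(deriv ψ s))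
      (cos (ψ s) * √(deriv ψ s)
        - sin (ψ s) * deriv (deriv ψ) s / (2 * deriv ψ s * √(deriv ψ s))) s :=
    eventually_of_mem (isOpen_Ioo.mem_nhds ht) fun s hs =>
      hasDerivAt_sin_div_sqrt (hdiff s hs).1.hasDerivAt (hdiff s hs).2.1.hasDerivAt (hpos s hs)
  have hv'' := hasDerivAt_cos_mul_sqrt_sub (hdiff t ht).1.hasDerivAt
    (hdiff t ht).2.1.hasDerivAt (hdiff t ht).2.2.hasDerivAt (hpos t ht)
  rw [deriv_deriv_eq_of_eventually_hasDerivAt hv' hv'']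
  linear_combination (sin (ψ t) / √(deriv ψ t)) * hkummer t ht
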